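/- For positive integers $m \neq m'$, the groups $H_m$ and $H_{m'}$ are not isomorphic, where $H_m$ is the subgroup of the integer Heisenberg group of upper unitriangular $3 \times 3$ integer matrices $A$ with $m \mid A_{12}$. -/

import Mathlib

open Matrix

/-- A `3 × 3` matrix is upper unitriangular if it has `1`s on the diagonal
and `0`s below the diagonal. -/
def IsUnitri {R : Type*} [CommRing R] (A : Matrix (Fin 3) (Fin 3) R) : Prop :=
  A 0 0 = 1 ∧ A 1 1 = 1 ∧ A 2 2 = 1 ∧ A 1 0 = 0 ∧ A 2 0 = 0 ∧ A 2 1 = 0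

/-- The Heisenberg group over `R`: upper unitriangular `3 × 3` matrices. -/
def Heisenberg (R : Type*) [CommRing R] : Type _ :=
  {A : Matrix (Fin 3) (Fin 3) R // IsUnitri A}

namespace Heisenberg

variable {R : Type*} [CommRing R]

theorem isUnitri_mul {A B : Matrix (Fin 3) (Fin 3) R} (hA : IsUnitri A)
    (hB : IsUnitri B) : IsUnitri (A * B) := by
  obtain ⟨a1, a2, a3, a4, a5, a6⟩ := hA
  obtain ⟨b1, b2, b3, b4, b5, b6⟩ := hB
  refine ⟨?_, ?_, ?_, ?_, ?_, ?_⟩ <;>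
    simp [Matrix.mul_apply, Fin.sum_univ_three, a1, a2, a3, a4, a5, a6,
      b1, b2, b3, b4, b5, b6]

instance : Group (Heisenberg R) where
  mul A B := ⟨A.1 * B.1, isUnitri_mul A.2 B.2⟩
  one := ⟨1, by refine ⟨?_, ?_, ?_, ?_, ?_, ?_⟩ <;> simp [Matrix.one_apply]⟩
  inv A := ⟨!![1, -(A.1 0 1), A.1 0 1 * A.1 1 2 - A.1 0 2;
               0, 1, -(A.1 1 2);
               0, 0, 1], by
    refine ⟨?_, ?_, ?_, ?_, ?_, ?_⟩ <;> simp [Matrix.vecHead, Matrix.vecTail]⟩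
  mul_assoc A B C := Subtype.ext (mul_assoc A.1 B.1 C.1)
  one_mul A := Subtype.ext (one_mul A.1)
  mul_one A := Subtype.ext (mul_one A.1)
  inv_mul_cancel A := by
    obtain ⟨a1, a2, a3, a4, a5, a6⟩ := A.2
    apply Subtype.ext
    show _ * A.1 = (1 : Matrix (Fin 3) (Fin 3) R)
    ext i j
    fin_cases i <;> fin_cases j <;>
      simp [Matrix.mul_apply, Fin.sum_univ_three, Matrix.one_apply,
        a1, a2, a3, a4, a5, a6] <;> ring

@[simp] theorem mul_val (A B : Heisenberg R) : (A * B).1 = A.1 * B.1 := rfl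

@[simp] theorem one_val : ((1 : Heisenberg R)).1 = (1 : Matrix (Fin 3) (Fin 3) R) := rfl

@[simp] theorem inv_val (A : Heisenberg R) :
    (A⁻¹).1 = !![1, -(A.1 0 1), A.1 0 1 * A.1 1 2 - A.1 0 2;
                 0, 1, -(A.1 1 2);
                 0, 0, 1] := rfl

theorem mul_apply_01 (A B : Heisenberg R) :
    (A * B).1 0 1 = A.1 0 1 + B.1 0 1 := by
  obtain ⟨a1, a2, a3, a4, a5, a6⟩ := A.2
  obtain ⟨b1, b2, b3, b4, b5, b6⟩ := B.2
  simp [Matrix.mul_apply, Fin.sum_univ_three, a1, a2, a3, a4, a5, a6,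
    b1, b2, b3, b4, b5, b6]
  ring

end Heisenberg


/-- The subgroup `H_m` of the integer Heisenberg group consisting of matrices
whose `(1,2)`-entry is divisible by `m`. -/
def Hsub (m : ℕ) : Subgroup (Heisenberg ℤ) where
  carrier := {A | (m : ℤ) ∣ A.1 0 1}
  mul_mem' := by
    intro A B hA hB
    simpa [Heisenberg.mul_apply_01] using dvd_add hA hB
  one_mem' := by simp [Matrix.one_apply]
  inv_mem' := by
    intro A hA
    simpa using hA.neg_right

instance Hsub_normal (m : ℕ) : (Hsub m).Normal := by
  constructor
  intro A hA g
  have : (g * A * g⁻¹).1 0 1 = A.1 0 1 := by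
    rw [Heisenberg.mul_apply_01, Heisenberg.mul_apply_01]
    simp
  show (m : ℤ) ∣ _
  rw [this]
  exact hA

/-!
The map `A ↦ (A 0 1 / m, A 1 2, A 0 2 mod m)` is a surjective homomorphism `H_m → ℤ × ℤ × ℤ/m`.
Its kernel consists of the central matrices with `m ∣ A 0 2`, and the central matrix with corner
`m * c` is the commutator of `mk m 0 0` and `mk 0 c 0`; so the kernel is the commutator subgroup
and `H_m` has abelianization `ℤ² × ℤ/m`, whose torsion subgroup has order `m`.
-/

open scoped commutatorElement

namespace Heisenberg

variable {R : Type*} [CommRing R]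

def mk (a b c : R) : Heisenberg R :=
  ⟨!![1, a, c; 0, 1, b; 0, 0, 1], by simp [IsUnitri]⟩

@[simp] theorem mk_apply_01 (a b c : R) : (mk a b c).1 0 1 = a := rfl
@[simp] theorem mk_apply_12 (a b c : R) : (mk a b c).1 1 2 = b := rfl
@[simp] theorem mk_apply_02 (a b c : R) : (mk a b c).1 0 2 = c := rfl

theorem val_eq (A : Heisenberg R) : A.1 = !![1, A.1 0 1, A.1 0 2; 0, 1, A.1 1 2; 0, 0, 1] := by
  obtain ⟨h00, h11, h22, h10, h20, h21⟩ := A.2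
  ext i j
  fin_cases i <;> fin_cases j <;> simp [h00, h11, h22, h10, h20, h21]

theorem ext_entries {A B : Heisenberg R} (h01 : A.1 0 1 = B.1 0 1) (h12 : A.1 1 2 = B.1 1 2)
    (h02 : A.1 0 2 = B.1 0 2) : A = B := by
  apply Subtype.ext
  rw [A.val_eq, B.val_eq, h01, h12, h02]

theorem mul_apply_12 (A B : Heisenberg R) : (A * B).1 1 2 = A.1 1 2 + B.1 1 2 := by
  rw [mul_val, A.val_eq, B.val_eq]
  simp [Matrix.mul_apply, Fin.sum_univ_three, add_comm]

theorem mul_apply_02 (A B : Heisenberg R) :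
    (A * B).1 0 2 = A.1 0 2 + B.1 0 2 + A.1 0 1 * B.1 1 2 := by
  rw [mul_val, A.val_eq, B.val_eq]
  simp [Matrix.mul_apply, Fin.sum_univ_three, add_comm, add_assoc]

theorem mk_commutatorElement (a b : R) : ⁅mk a 0 0, mk 0 b 0⁆ = mk 0 0 (a * b) := by
  apply ext_entries <;>
    simp [commutatorElement_def, mul_apply_01, mul_apply_12, mul_apply_02]

end Heisenberg

open Multiplicative

section Torsion

variable {A B : Type*} [AddCommGroup A] [AddCommGroup B]

theorem AddEquiv.card_torsion_eq (e : A ≃+ B) :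
    Nat.card (AddCommGroup.torsion A) = Nat.card (AddCommGroup.torsion B) := by
  rw [← e.map_torsion]
  exact Nat.card_congr (e.addSubgroupMap _).toEquiv

theorem AddCommGroup.card_torsion_prod_of_isAddTorsionFree [IsAddTorsionFree A] :
    Nat.card (AddCommGroup.torsion (A × B)) = Nat.card (AddCommGroup.torsion B) :=
  Nat.card_congr
    { toFun x := ⟨x.1.2, x.2.snd⟩
      invFun b := ⟨(0, b), IsOfFinAddOrder.zero.prod_mk b.2⟩
      left_inv x := Subtype.ext (Prod.ext (x.2.fst.eq_zero').symm rfl)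
      right_inv _ := rfl }

end Torsion

theorem card_torsion_int_prod_int_prod_zmod (m : ℕ) [NeZero m] :
    Nat.card (AddCommGroup.torsion (ℤ × ℤ × ZMod m)) = m := by
  rw [AddCommGroup.card_torsion_prod_of_isAddTorsionFree,
    AddCommGroup.card_torsion_prod_of_isAddTorsionFree,
    AddCommGroup.torsion_eq_top_iff.mpr isAddTorsion_of_finite, AddSubgroup.card_top, Nat.card_zmod]

namespace Hsub

def abelianizationMap (m : ℕ) : Hsub m →* Multiplicative (ℤ × ℤ × ZMod m) where
  toFun A := ofAdd (A.1.1 0 1 / m, A.1.1 1 2, ((A.1.1 0 2 : ℤ) : ZMod m))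
  map_one' := by simp
  map_mul' A B := by
    have hA : ((A.1.1 0 1 : ℤ) : ZMod m) = 0 := (ZMod.intCast_zmod_eq_zero_iff_dvd _ _).mpr A.2
    simp only [Subgroup.coe_mul, Heisenberg.mul_apply_01, Heisenberg.mul_apply_12,
      Heisenberg.mul_apply_02, Int.add_ediv_of_dvd_left A.2, ← ofAdd_add, Prod.mk_add_mk,
      Int.cast_add, Int.cast_mul, hA, zero_mul, add_zero]

variable (m : ℕ) [NeZero m]

theorem abelianizationMap_surjective : Function.Surjective (abelianizationMap m) := by
  refine ofAdd.surjective.forall.mpr fun ⟨a, b, c⟩ =>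
    ⟨⟨Heisenberg.mk (m * a) b (c.cast : ℤ), dvd_mul_right _ _⟩, ?_⟩
  simp [abelianizationMap, Int.mul_ediv_cancel_left _ (NeZero.ne (m : ℤ))]

theorem ker_abelianizationMap : (abelianizationMap m).ker = commutator (Hsub m) := by
  refine le_antisymm (fun A hA => ?_) (Abelianization.commutator_subset_ker _)
  simp only [MonoidHom.mem_ker, abelianizationMap, MonoidHom.coe_mk, OneHom.coe_mk, ofAdd_eq_one,
    Prod.mk_eq_zero] at hA
  obtain ⟨h01, h12, h02⟩ := hA
  obtain ⟨a, ha⟩ : (m : ℤ) ∣ A.1.1 0 1 := A.2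
  rw [ha, Int.mul_ediv_cancel_left _ (NeZero.ne _)] at h01
  obtain ⟨c, hc⟩ := (ZMod.intCast_zmod_eq_zero_iff_dvd _ _).mp h02
  have hA : A = ⁅(⟨.mk m 0 0, dvd_refl _⟩ : Hsub m), ⟨.mk 0 c 0, dvd_zero _⟩⁆ := by
    refine Subtype.ext ?_
    show _ = ⁅Heisenberg.mk (m : ℤ) 0 0, Heisenberg.mk 0 c 0⁆
    rw [Heisenberg.mk_commutatorElement]
    exact Heisenberg.ext_entries (by simp [ha, h01]) (by simp [h12]) (by simp [hc])
  rw [hA]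
  exact Subgroup.commutator_mem_commutator (Subgroup.mem_top _) (Subgroup.mem_top _)

noncomputable def abelianizationEquiv :
    Abelianization (Hsub m) ≃* Multiplicative (ℤ × ℤ × ZMod m) :=
  (QuotientGroup.quotientMulEquivOfEq (ker_abelianizationMap m)).symm.trans
    (QuotientGroup.quotientKerEquivOfSurjective _ (abelianizationMap_surjective m))

end Hsub

/-- For `m ≠ m'`, the groups `H_m` and `H_{m'}` are not isomorphic. -/
theorem stmt_8 (m m' : ℕ) (hm : 0 < m) (hm' : 0 < m') (hne : m ≠ m') :
    IsEmpty (↥(Hsub m) ≃* ↥(Hsub m')) := by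
  refine ⟨fun φ => hne ?_⟩
  have : NeZero m := ⟨hm.ne'⟩
  have : NeZero m' := ⟨hm'.ne'⟩
  let e := (Hsub.abelianizationEquiv m).symm.trans
    (φ.abelianizationCongr.trans (Hsub.abelianizationEquiv m'))
  rw [← card_torsion_int_prod_int_prod_zmod m, ← card_torsion_int_prod_int_prod_zmod m']
  exact (AddEquiv.toMultiplicative.symm e).card_torsion_eq
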